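/- arXiv:1307.0495 — 3 statements merged into one kernel-verified Lean document; each statement's English description precedes it below -/
import Mathlib

section
/- For all integers k ≥ j ≥ 0, the sum over i from j to k of (1/(i+1)) * C(2i,i) * C(2(k-i), k-i) equals ((2k+1-2j)/(k+1)) * C(2j,j) * C(2(k-j), k-j). -/
open Finset BigOperators

/-- A word `w` of length `n` over the alphabet `[k]` contains the permutation
pattern `p` of length `m`. -/
def WordContains {n k m : ℕ} (w : Fin n → Fin k) (p : Equiv.Perm (Fin m)) : Prop :=
  ∃ ι : Fin m → Fin n, StrictMono ι ∧ ∀ a b : Fin m, w (ι a) < w (ι b) ↔ p a < p b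

/-- The number of words of length `n` over the alphabet `[k]` avoiding the pattern `p`. -/
noncomputable def wordAvoidCount (n k m : ℕ) (p : Equiv.Perm (Fin m)) : ℕ :=
  Nat.card {w : Fin n → Fin k // ¬ WordContains w p}

/-- An ordered set partition of `[n]` into `k` blocks. -/
structure OrdPartition (n k : ℕ) where
  blocks : Fin k → Finset (Fin n)
  blocks_nonempty : ∀ i, (blocks i).Nonempty
  blocks_disjoint : ∀ i j, i ≠ j → Disjoint (blocks i) (blocks j)
  blocks_cover : ∀ x : Fin n, ∃ i, x ∈ blocks i

/-- An ordered set partition contains the permutation pattern `p`. -/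
def OPContains {n k m : ℕ} (P : OrdPartition n k) (p : Equiv.Perm (Fin m)) : Prop :=
  ∃ ι : Fin m → Fin k, StrictMono ι ∧ ∃ b : Fin m → Fin n,
    (∀ j, b j ∈ P.blocks (ι j)) ∧ ∀ a c : Fin m, b a < b c ↔ p a < p c

/-- The number of ordered set partitions of `[n]` into `k` blocks avoiding `p`. -/
noncomputable def opAvoidCount (n k m : ℕ) (p : Equiv.Perm (Fin m)) : ℕ :=
  Nat.card {P : OrdPartition n k // ¬ OPContains P p}

/-- The pattern 321. -/
def p321 : Equiv.Perm (Fin 3) := Fin.revPerm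

/-
Write `c n` for the central binomial coefficient. The recursion
`(n + 1) c (n + 1) = 2 (2n + 1) c n` shows that `G m n = (2n + 1) / (m + n + 1) c m c n`
satisfies `G m (n + 1) - G (m + 1) n = c m c (n + 1) / (m + 1)`. Along the antidiagonal
`m + n = k` the summand is therefore a telescoping difference, and the sum over `j ≤ i ≤ k`
collapses to `G j (k - j)`.
-/

section CentralBinom

variable {K : Type*} [Field K] [CharZero K]

theorem Nat.cast_centralBinom_succ (n : ℕ) :
    (Nat.centralBinom (n + 1) : K) = 2 * (2 * n + 1) / (n + 1) * Nat.centralBinom n := by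
  have h := congrArg (Nat.cast : ℕ → K) (Nat.succ_mul_centralBinom_succ n)
  push_cast at h
  rw [div_mul_eq_mul_div, eq_div_iff n.cast_add_one_ne_zero, mul_comm, h]

theorem centralBinom_telescope (m n : ℕ) :
    (2 * n + 3 : K) / (m + n + 2) * Nat.centralBinom m * Nat.centralBinom (n + 1)
      - (2 * n + 1) / (m + n + 2) * Nat.centralBinom (m + 1) * Nat.centralBinom n
      = Nat.centralBinom m * Nat.centralBinom (n + 1) / (m + 1) := by
  have hmn : (m + n + 2 : K) ≠ 0 := by exact_mod_cast (m + n + 1).succ_ne_zero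
  rw [Nat.cast_centralBinom_succ m, Nat.cast_centralBinom_succ n]
  field_simp
  ring

theorem sum_Icc_centralBinom_mul_div (j d : ℕ) :
    ∑ i ∈ Icc j (j + d), (Nat.centralBinom i : K) * Nat.centralBinom (j + d - i) / (i + 1)
      = (2 * d + 1) / (j + d + 1) * Nat.centralBinom j * Nat.centralBinom d := by
  induction d generalizing j with
  | zero => simp [div_eq_inv_mul]
  | succ d ih =>
    rw [show j + (d + 1) = j + 1 + d by ring, Icc_eq_cons_Ioc (by omega), sum_cons,
      ← Icc_add_one_left_eq_Ioc, ih (j + 1), show j + 1 + d - j = d + 1 by omega,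
      ← centralBinom_telescope]
    push_cast
    ring

end CentralBinom

theorem sum_catalan_convolution (k j : ℕ) (hjk : j ≤ k) :
    ∑ i ∈ Finset.Icc j k,
        (1 : ℚ) / (i + 1) * (Nat.choose (2 * i) i) * (Nat.choose (2 * (k - i)) (k - i))
      = ((2 * k + 1 : ℚ) - 2 * j) / (k + 1) *
          (Nat.choose (2 * j) j) * (Nat.choose (2 * (k - j)) (k - j)) := by
  obtain ⟨d, rfl⟩ := Nat.exists_eq_add_of_le hjk
  simp only [← Nat.centralBinom_eq_two_mul_choose, Nat.add_sub_cancel_left]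
  calc _ = ∑ i ∈ Icc j (j + d),
          (Nat.centralBinom i : ℚ) * Nat.centralBinom (j + d - i) / (i + 1) :=
        sum_congr rfl fun i _ => by ring
    _ = _ := by
      rw [sum_Icc_centralBinom_mul_div]
      push_cast
      ring
end

section
/- Let p be a permutation pattern and let op_{n,k}(p) denote the number of ordered set partitions of {1,...,n} into k blocks avoiding p, and let W_j(n,p) denote the number of words of length n over the alphabet {1,...,j} avoiding p. Then for all n ≥ k ≥ 1, op_{n,k}(p) = Σ_{j=1}^{k} C(k,j) (-1)^{k-j} W_j(n, p^{-1}), where p^{-1} is the inverse permutation of p. -/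
open Finset BigOperators

/-!
Recording for each element of `[n]` the index of its block turns an ordered set partition into a
surjective word `[n] → [k]`; an occurrence of `p` in the partition, with blocks increasing and
elements forming `p`, is then an occurrence of `p⁻¹` in the word, read position by position.
Inclusion–exclusion over the letters a word uses counts the surjective `p⁻¹`-avoiding words
through the `p⁻¹`-avoiding words over subalphabets `s ⊆ [k]`, and their number depends only on
`#s`, since pattern containment is invariant under order-preserving relabelling of the letters.
-/

open Function

theorem natCard_surjective_and {α β : Type*} [Finite α] [Fintype β] [DecidableEq β]
    (P : (α → β) → Prop) :
    (Nat.card {f : α → β // Surjective f ∧ P f} : ℤ) =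
      ∑ s : Finset β, (-1 : ℤ) ^ #sᶜ * Nat.card {f : α → β // (∀ a, f a ∈ s) ∧ P f} := by
  classical
  have := Fintype.ofFinite α
  -- `S b` consists of the maps missing the letter `b`; inclusion–exclusion runs over the sets `t`
  -- of missed letters, which are reindexed below by the sets `s = tᶜ` of allowed letters.
  set S : β → Finset (α → β) := fun b => univ.filter fun f => ∀ a, f a ≠ b
  have ie := inclusion_exclusion_sum_inf_compl (G := ℤ) univ S fun f => if P f then 1 else 0
  simp only [sum_boole, smul_eq_mul, powerset_univ] at ie
  simp only [Nat.card_eq_fintype_card, Fintype.card_subtype]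
  have hsurj : univ.filter (fun f : α → β => Surjective f ∧ P f) =
      (univ.inf fun b => (S b)ᶜ).filter P := by
    ext f
    simp only [mem_filter, mem_inf, mem_compl, S]
    simp [Surjective]
  rw [hsurj, ie]
  refine Fintype.sum_equiv (compl_involutive.toPerm _) _ _ fun t => ?_
  have hmiss : (t.inf S).filter P = univ.filter fun f => (∀ a, f a ∈ tᶜ) ∧ P f := by
    ext f
    simp only [mem_filter, mem_inf, mem_compl, mem_univ, true_and, S]
    grind
  simp only [Involutive.coe_toPerm, compl_compl, hmiss]
  rfl

theorem wordContains_comp_iff {n j K m : ℕ} {f : Fin j → Fin K} (hf : StrictMono f)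
    (w : Fin n → Fin j) (q : Equiv.Perm (Fin m)) :
    WordContains (f ∘ w) q ↔ WordContains w q := by
  simp only [WordContains, comp_apply, hf.lt_iff_lt]

theorem natCard_mem_and_not_wordContains {n K m : ℕ} (s : Finset (Fin K))
    (q : Equiv.Perm (Fin m)) :
    Nat.card {w : Fin n → Fin K // (∀ x, w x ∈ s) ∧ ¬ WordContains w q} =
      wordAvoidCount n #s m q := by
  let e : (Fin n → Fin #s) ≃ {w : Fin n → Fin K // ∀ x, w x ∈ s} :=
    (Equiv.arrowCongr (Equiv.refl _) (s.orderIsoOfFin rfl).toEquiv).trans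
      Equiv.subtypePiEquivPi.symm
  have he : ∀ w, (e w : Fin n → Fin K) = s.orderEmbOfFin rfl ∘ w := fun w => rfl
  symm
  refine Nat.card_congr ((e.subtypeEquiv fun w => ?_).trans
    (Equiv.subtypeSubtypeEquivSubtypeInter _ fun w => ¬ WordContains w q))
  rw [he, wordContains_comp_iff (s.orderEmbOfFin rfl).strictMono]

theorem wordAvoidCount_zero_right {n m : ℕ} (hn : n ≠ 0) (q : Equiv.Perm (Fin m)) :
    wordAvoidCount n 0 m q = 0 := by
  have : IsEmpty (Fin n → Fin 0) := by
    obtain ⟨n, rfl⟩ := Nat.exists_eq_succ_of_ne_zero hn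
    infer_instance
  simp [wordAvoidCount]

theorem natCard_surjective_and_not_wordContains (n k m : ℕ) (q : Equiv.Perm (Fin m)) :
    (Nat.card {w : Fin n → Fin k // Surjective w ∧ ¬ WordContains w q} : ℤ) =
      ∑ j ∈ range (k + 1), (k.choose j : ℤ) * (-1) ^ (k - j) * wordAvoidCount n j m q := by
  rw [natCard_surjective_and]
  simp only [natCard_mem_and_not_wordContains, card_compl, Fintype.card_fin]
  rw [← powerset_univ,
    sum_powerset_apply_card fun j => (-1 : ℤ) ^ (k - j) * wordAvoidCount n j m q]
  simp [mul_assoc]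

namespace OrdPartition

variable {n k : ℕ}

theorem ext_blocks {P Q : OrdPartition n k} (h : P.blocks = Q.blocks) : P = Q := by
  cases P; cases Q; cases h; rfl

noncomputable def toWord (P : OrdPartition n k) (x : Fin n) : Fin k :=
  (P.blocks_cover x).choose

theorem mem_blocks_iff_toWord_eq (P : OrdPartition n k) (x : Fin n) (i : Fin k) :
    x ∈ P.blocks i ↔ P.toWord x = i := by
  refine ⟨fun hx => ?_, fun h => h ▸ (P.blocks_cover x).choose_spec⟩
  by_contra hne
  exact disjoint_left.mp (P.blocks_disjoint _ i hne) (P.blocks_cover x).choose_spec hx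

theorem toWord_surjective (P : OrdPartition n k) : Surjective P.toWord := fun i =>
  let ⟨x, hx⟩ := P.blocks_nonempty i
  ⟨x, (P.mem_blocks_iff_toWord_eq x i).mp hx⟩

def ofSurjective (w : Fin n → Fin k) (hw : Surjective w) : OrdPartition n k where
  blocks i := univ.filter fun x => w x = i
  blocks_nonempty i := let ⟨x, hx⟩ := hw i; ⟨x, by simp [hx]⟩
  blocks_disjoint i j hij := disjoint_filter.mpr fun _ _ hi hj => hij (hi ▸ hj)
  blocks_cover x := ⟨w x, by simp⟩

noncomputable def equivSurjective : OrdPartition n k ≃ {w : Fin n → Fin k // Surjective w} where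
  toFun P := ⟨P.toWord, P.toWord_surjective⟩
  invFun w := ofSurjective w.1 w.2
  left_inv P := ext_blocks <| funext fun i => by
    ext x; simp [ofSurjective, mem_blocks_iff_toWord_eq]
  right_inv w := Subtype.ext <| funext fun x =>
    ((ofSurjective w.1 w.2).mem_blocks_iff_toWord_eq x (w.1 x)).mp (by simp [ofSurjective])

theorem opContains_iff_wordContains_toWord {m : ℕ} (P : OrdPartition n k)
    (p : Equiv.Perm (Fin m)) : OPContains P p ↔ WordContains P.toWord p⁻¹ := by
  have hb := P.mem_blocks_iff_toWord_eq
  constructor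
  · rintro ⟨ι, hι, b, hmem, hcmp⟩
    refine ⟨fun a => b (p⁻¹ a), fun a c hac => (hcmp _ _).mpr (by simpa using hac),
      fun a c => ?_⟩
    rw [(hb _ _).mp (hmem _), (hb _ _).mp (hmem _), hι.lt_iff_lt]
  · rintro ⟨κ, hκ, hcmp⟩
    refine ⟨fun j => P.toWord (κ (p j)), fun a c hac => (hcmp _ _).mpr (by simpa using hac),
      fun j => κ (p j), fun j => (hb _ _).mpr rfl, fun a c => hκ.lt_iff_lt⟩

end OrdPartition

theorem opAvoidCount_eq_natCard_surjective (n k m : ℕ) (p : Equiv.Perm (Fin m)) :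
    opAvoidCount n k m p =
      Nat.card {w : Fin n → Fin k // Surjective w ∧ ¬ WordContains w p⁻¹} :=
  Nat.card_congr <| (OrdPartition.equivSurjective.subtypeEquiv fun P => by
      rw [OrdPartition.opContains_iff_wordContains_toWord]; rfl).trans
    (Equiv.subtypeSubtypeEquivSubtypeInter _ fun w => ¬ WordContains w p⁻¹)

theorem op_eq_alternating_sum_words (m : ℕ) (p : Equiv.Perm (Fin m)) (n k : ℕ)
    (hk : 1 ≤ k) (hkn : k ≤ n) :
    (opAvoidCount n k m p : ℤ) =
      ∑ j ∈ Finset.Icc 1 k,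
        (Nat.choose k j : ℤ) * (-1) ^ (k - j) * (wordAvoidCount n j m p⁻¹ : ℤ) := by
  rw [opAvoidCount_eq_natCard_surjective, natCard_surjective_and_not_wordContains]
  refine (sum_subset (fun j hj => ?_) fun j hj hj' => ?_).symm
  · simp only [mem_Icc, mem_range] at hj ⊢; omega
  · obtain rfl : j = 0 := by simp only [mem_Icc, mem_range] at hj hj'; omega
    simp [wordAvoidCount_zero_right (by omega : n ≠ 0)]
end

section
/- For every n ≥ 1, the number of ordered set partitions of [n] into 3 blocks avoiding the pattern 321 equals (n^2 + 3n - 16)·2^{n-3} + 3. -/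
open Finset BigOperators

set_option linter.unreachableTactic false
set_option linter.unusedTactic false

/-- word has a 0 -/
def Has0 {n : ℕ} (w : Fin n → Fin 3) : Prop := ∃ i, w i = 0
/-- word has a 1 followed by 0 -/
def Has10 {n : ℕ} (w : Fin n → Fin 3) : Prop := ∃ i j : Fin n, i < j ∧ w i = 1 ∧ w j = 0
/-- word has 2,1,0 descending -/
def Bad {n : ℕ} (w : Fin n → Fin 3) : Prop :=
  ∃ i j k : Fin n, i < j ∧ j < k ∧ w i = 2 ∧ w j = 1 ∧ w k = 0

instance {n} : DecidablePred (Has0 (n := n)) := fun w => by unfold Has0; infer_instance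
instance {n} : DecidablePred (Has10 (n := n)) := fun w => by unfold Has10; infer_instance
instance {n} : DecidablePred (Bad (n := n)) := fun w => by unfold Bad; infer_instance

def aCnt (n : ℕ) : ℕ := #(univ.filter fun w : Fin n → Fin 3 => ¬ Has0 w)
def bCnt (n : ℕ) : ℕ := #(univ.filter fun w : Fin n → Fin 3 => Has0 w ∧ ¬ Has10 w)
def cCnt (n : ℕ) : ℕ := #(univ.filter fun w : Fin n → Fin 3 => Has10 w ∧ ¬ Bad w)
def tCnt (n : ℕ) : ℕ := #(univ.filter fun w : Fin n → Fin 3 => ¬ Bad w)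

lemma has0_cons {n : ℕ} (x : Fin 3) (v : Fin n → Fin 3) :
    Has0 (Fin.cons x v) ↔ x = 0 ∨ Has0 v := by
  unfold Has0
  rw [Fin.exists_fin_succ]
  simp [Fin.cons_succ]

lemma exists_pos_succ {n : ℕ} (Q : Fin (n+1) → Prop) :
    (∃ j : Fin (n+1), 0 < j ∧ Q j) ↔ ∃ j : Fin n, Q j.succ := by
  constructor
  · rintro ⟨j, hj, hQ⟩
    rcases Fin.eq_zero_or_eq_succ j with rfl | ⟨j', rfl⟩
    · exact absurd hj (lt_irrefl _)
    · exact ⟨j', hQ⟩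
  · rintro ⟨j, hQ⟩
    exact ⟨j.succ, j.succ_pos, hQ⟩

lemma has10_cons {n : ℕ} (x : Fin 3) (v : Fin n → Fin 3) :
    Has10 (Fin.cons x v) ↔ Has10 v ∨ (x = 1 ∧ Has0 v) := by
  unfold Has10 Has0
  rw [Fin.exists_fin_succ]
  constructor
  · rintro (⟨j, hj, h1, h0⟩ | ⟨i, j, hij, h1, h0⟩)
    · rcases Fin.eq_zero_or_eq_succ j with rfl | ⟨j', rfl⟩
      · exact absurd hj (lt_irrefl _)
      · rw [Fin.cons_zero] at h1; rw [Fin.cons_succ] at h0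
        exact Or.inr ⟨h1, j', h0⟩
    · rcases Fin.eq_zero_or_eq_succ j with rfl | ⟨j', rfl⟩
      · exact absurd hij (Fin.not_lt_zero _)
      · rw [Fin.cons_succ] at h1 h0
        exact Or.inl ⟨i, j', (Fin.succ_lt_succ_iff).mp hij, h1, h0⟩
  · rintro (⟨i, j, hij, h1, h0⟩ | ⟨hx, j, h0⟩)
    · exact Or.inr ⟨i, j.succ, Fin.succ_lt_succ_iff.mpr hij, by simp [Fin.cons_succ, h1, h0]⟩
    · exact Or.inl ⟨j.succ, j.succ_pos, by simp [Fin.cons_zero, Fin.cons_succ, hx, h0]⟩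

lemma bad_cons {n : ℕ} (x : Fin 3) (v : Fin n → Fin 3) :
    Bad (Fin.cons x v) ↔ Bad v ∨ (x = 2 ∧ Has10 v) := by
  unfold Bad Has10
  rw [Fin.exists_fin_succ]
  constructor
  · rintro (⟨j, k, hij, hjk, h2, h1, h0⟩ | ⟨i, j, k, hij, hjk, h2, h1, h0⟩)
    · rcases Fin.eq_zero_or_eq_succ j with rfl | ⟨j', rfl⟩
      · exact absurd hij (lt_irrefl _)
      rcases Fin.eq_zero_or_eq_succ k with rfl | ⟨k', rfl⟩
      · exact absurd hjk (Fin.not_lt_zero _)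
      rw [Fin.cons_zero] at h2; rw [Fin.cons_succ] at h1 h0
      exact Or.inr ⟨h2, j', k', Fin.succ_lt_succ_iff.mp hjk, h1, h0⟩
    · rcases Fin.eq_zero_or_eq_succ j with rfl | ⟨j', rfl⟩
      · exact absurd hij (Fin.not_lt_zero _)
      rcases Fin.eq_zero_or_eq_succ k with rfl | ⟨k', rfl⟩
      · exact absurd hjk (Fin.not_lt_zero _)
      rw [Fin.cons_succ] at h2 h1 h0
      exact Or.inl ⟨i, j', k', Fin.succ_lt_succ_iff.mp hij, Fin.succ_lt_succ_iff.mp hjk, h2, h1, h0⟩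
  · rintro (⟨i, j, k, hij, hjk, h2, h1, h0⟩ | ⟨hx, i, j, hij, h1, h0⟩)
    · exact Or.inr ⟨i, j.succ, k.succ, Fin.succ_lt_succ_iff.mpr hij,
        Fin.succ_lt_succ_iff.mpr hjk, by simp [Fin.cons_succ, h2, h1, h0]⟩
    · exact Or.inl ⟨i.succ, j.succ, i.succ_pos, Fin.succ_lt_succ_iff.mpr hij,
        by simp [Fin.cons_zero, Fin.cons_succ, hx, h1, h0]⟩

lemma card_cons_sum {n : ℕ} (P : (Fin (n+1) → Fin 3) → Prop) [DecidablePred P] :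
    #(univ.filter P) =
      ∑ x : Fin 3, #(univ.filter fun v : Fin n → Fin 3 => P (Fin.cons x v)) := by
  classical
  have h1 : #(univ.filter P) = Fintype.card {w : Fin (n+1) → Fin 3 // P w} :=
    (Fintype.card_subtype _).symm
  have e1 : {p : Fin 3 × (Fin n → Fin 3) // P (Fin.cons p.1 p.2)} ≃
      {w : Fin (n+1) → Fin 3 // P w} :=
    (Fin.consEquiv fun _ => Fin 3).subtypeEquiv (fun p => Iff.rfl)
  have e2 : {p : Fin 3 × (Fin n → Fin 3) // P (Fin.cons p.1 p.2)} ≃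
      Σ x : Fin 3, {v : Fin n → Fin 3 // P (Fin.cons x v)} :=
    Equiv.subtypeProdEquivSigmaSubtype (fun x v => P (Fin.cons x v))
  rw [h1, ← Fintype.card_congr e1, Fintype.card_congr e2, Fintype.card_sigma]
  congr 1
  ext x
  exact Fintype.card_subtype _

lemma has10_has0 {n : ℕ} {v : Fin n → Fin 3} (h : Has10 v) : Has0 v := by
  obtain ⟨i, j, _, _, h0⟩ := h; exact ⟨j, h0⟩

lemma bad_has10 {n : ℕ} {v : Fin n → Fin 3} (h : Bad v) : Has10 v := by
  obtain ⟨i, j, k, _, hjk, _, h1, h0⟩ := h; exact ⟨j, k, hjk, h1, h0⟩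

lemma filter_iff_card {n : ℕ} {P Q : (Fin n → Fin 3) → Prop} [DecidablePred P] [DecidablePred Q]
    (h : ∀ v, P v ↔ Q v) : #(univ.filter P) = #(univ.filter Q) := by
  congr 1
  exact Finset.filter_congr fun v _ => h v

lemma filter_false_card {n : ℕ} {P : (Fin n → Fin 3) → Prop} [DecidablePred P]
    (h : ∀ v, ¬ P v) : #(univ.filter P) = 0 := by
  rw [Finset.card_eq_zero, Finset.filter_eq_empty_iff]
  exact fun v _ => h v

lemma card_filter_split {n : ℕ} (P Q : (Fin n → Fin 3) → Prop) [DecidablePred P]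
    [DecidablePred Q] :
    #(univ.filter P) = #(univ.filter fun v => P v ∧ Q v) +
      #(univ.filter fun v => P v ∧ ¬ Q v) := by
  rw [← Finset.card_filter_add_card_filter_not (s := univ.filter P) (p := Q),
    Finset.filter_filter, Finset.filter_filter]

lemma abCnt (n : ℕ) :
    #(univ.filter fun v : Fin n → Fin 3 => ¬ Has10 v) = aCnt n + bCnt n := by
  rw [card_filter_split (fun v : Fin n → Fin 3 => ¬ Has10 v) Has0]
  have e1 : #(univ.filter fun v : Fin n → Fin 3 => ¬ Has10 v ∧ Has0 v) = bCnt n := by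
    rw [bCnt]
    exact filter_iff_card fun v => by tauto
  have e2 : #(univ.filter fun v : Fin n → Fin 3 => ¬ Has10 v ∧ ¬ Has0 v) = aCnt n := by
    rw [aCnt]
    exact filter_iff_card fun v => by have h1 := @has10_has0 n v; tauto
  rw [e1, e2, add_comm]

lemma bcCnt (n : ℕ) :
    #(univ.filter fun v : Fin n → Fin 3 => Has0 v ∧ ¬ Bad v) = bCnt n + cCnt n := by
  rw [card_filter_split (fun v : Fin n → Fin 3 => Has0 v ∧ ¬ Bad v) Has10]
  have e1 : #(univ.filter fun v : Fin n → Fin 3 => (Has0 v ∧ ¬ Bad v) ∧ Has10 v) = cCnt n := by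
    rw [cCnt]
    exact filter_iff_card fun v => by have h1 := @has10_has0 n v; tauto
  have e2 : #(univ.filter fun v : Fin n → Fin 3 => (Has0 v ∧ ¬ Bad v) ∧ ¬ Has10 v) = bCnt n := by
    rw [bCnt]
    exact filter_iff_card fun v => by have h2 := @bad_has10 n v; tauto
  rw [e1, e2, add_comm]

lemma tCnt_eq (n : ℕ) : tCnt n = aCnt n + (bCnt n + cCnt n) := by
  rw [tCnt, card_filter_split (fun v : Fin n → Fin 3 => ¬ Bad v) Has0, ← bcCnt]
  have e1 : #(univ.filter fun v : Fin n → Fin 3 => ¬ Bad v ∧ Has0 v) =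
      #(univ.filter fun v : Fin n → Fin 3 => Has0 v ∧ ¬ Bad v) :=
    filter_iff_card fun v => by tauto
  have e2 : #(univ.filter fun v : Fin n → Fin 3 => ¬ Bad v ∧ ¬ Has0 v) = aCnt n := by
    rw [aCnt]
    exact filter_iff_card fun v => by
      have h1 := @has10_has0 n v; have h2 := @bad_has10 n v; tauto
  rw [e1, e2, add_comm]

lemma aCnt_zero : aCnt 0 = 1 := by decide
lemma bCnt_zero : bCnt 0 = 0 := by decide
lemma cCnt_zero : cCnt 0 = 0 := by decide

lemma aRec (n : ℕ) : aCnt (n+1) = 2 * aCnt n := by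
  rw [aCnt, card_cons_sum, Fin.sum_univ_three]
  have e0 : #(univ.filter fun v : Fin n → Fin 3 => ¬ Has0 (Fin.cons 0 v)) = 0 :=
    filter_false_card fun v h => h ((has0_cons 0 v).mpr (Or.inl rfl))
  have e1 : #(univ.filter fun v : Fin n → Fin 3 => ¬ Has0 (Fin.cons 1 v)) = aCnt n :=
    filter_iff_card fun v => by
      rw [has0_cons]; simp [show (1 : Fin 3) ≠ 0 by decide]
  have e2 : #(univ.filter fun v : Fin n → Fin 3 => ¬ Has0 (Fin.cons 2 v)) = aCnt n :=
    filter_iff_card fun v => by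
      rw [has0_cons]; simp [show (2 : Fin 3) ≠ 0 by decide]
  rw [e0, e1, e2]; ring

lemma bRec (n : ℕ) : bCnt (n+1) = aCnt n + 2 * bCnt n := by
  rw [bCnt, card_cons_sum, Fin.sum_univ_three]
  have e0 : #(univ.filter fun v : Fin n → Fin 3 =>
      Has0 (Fin.cons 0 v) ∧ ¬ Has10 (Fin.cons 0 v)) = aCnt n + bCnt n := by
    rw [← abCnt]
    exact filter_iff_card fun v => by
      rw [has0_cons, has10_cons]; simp [show (0 : Fin 3) ≠ 1 by decide]
  have e1 : #(univ.filter fun v : Fin n → Fin 3 =>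
      Has0 (Fin.cons 1 v) ∧ ¬ Has10 (Fin.cons 1 v)) = 0 :=
    filter_false_card fun v h => by
      rw [has0_cons, has10_cons] at h
      simp [show (1 : Fin 3) ≠ 0 by decide] at h
      tauto
  have e2 : #(univ.filter fun v : Fin n → Fin 3 =>
      Has0 (Fin.cons 2 v) ∧ ¬ Has10 (Fin.cons 2 v)) = bCnt n := by
    rw [bCnt]
    exact filter_iff_card fun v => by
      rw [has0_cons, has10_cons]
      simp [show (2 : Fin 3) ≠ 0 by decide, show (2 : Fin 3) ≠ 1 by decide]
  rw [e0, e1, e2]; ring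

lemma cRec (n : ℕ) : cCnt (n+1) = bCnt n + 2 * cCnt n := by
  rw [cCnt, card_cons_sum, Fin.sum_univ_three]
  have e0 : #(univ.filter fun v : Fin n → Fin 3 =>
      Has10 (Fin.cons 0 v) ∧ ¬ Bad (Fin.cons 0 v)) = cCnt n := by
    rw [cCnt]
    exact filter_iff_card fun v => by
      rw [has10_cons, bad_cons]
      simp [show (0 : Fin 3) ≠ 1 by decide, show (0 : Fin 3) ≠ 2 by decide]
  have e1 : #(univ.filter fun v : Fin n → Fin 3 =>
      Has10 (Fin.cons 1 v) ∧ ¬ Bad (Fin.cons 1 v)) = bCnt n + cCnt n := by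
    rw [← bcCnt]
    refine filter_iff_card fun v => ?_
    rw [has10_cons, bad_cons]
    simp only [show (1 : Fin 3) ≠ 2 by decide, false_and, or_false, true_and, eq_self_iff_true]
    constructor
    · rintro ⟨h10 | h0, hb⟩
      · exact ⟨has10_has0 h10, hb⟩
      · exact ⟨h0, hb⟩
    · rintro ⟨h0, hb⟩; exact ⟨Or.inr h0, hb⟩
  have e2 : #(univ.filter fun v : Fin n → Fin 3 =>
      Has10 (Fin.cons 2 v) ∧ ¬ Bad (Fin.cons 2 v)) = 0 :=
    filter_false_card fun v h => by
      rw [has10_cons, bad_cons] at h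
      simp [show (2 : Fin 3) ≠ 1 by decide] at h
      tauto
  rw [e0, e1, e2]; ring

lemma closed_forms (n : ℕ) :
    (aCnt n : ℚ) = 2 ^ n ∧ (bCnt n : ℚ) = n * 2 ^ n / 2 ∧
      (cCnt n : ℚ) = n * (n - 1) * 2 ^ n / 8 := by
  induction n with
  | zero => norm_num [aCnt_zero, bCnt_zero, cCnt_zero]
  | succ n ih =>
    obtain ⟨ha, hb, hc⟩ := ih
    refine ⟨?_, ?_, ?_⟩
    · rw [aRec]; push_cast [ha]; ring
    · rw [bRec]; push_cast [ha, hb]; ring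
    · rw [cRec]; push_cast [hb, hc]; ring

lemma tCnt_closed (n : ℕ) : (tCnt n : ℚ) = ((n : ℚ) ^ 2 + 3 * n + 8) * 2 ^ n / 8 := by
  obtain ⟨ha, hb, hc⟩ := closed_forms n
  rw [tCnt_eq]
  push_cast [ha, hb, hc]
  ring

lemma bad_surjective {n : ℕ} {w : Fin n → Fin 3} (h : Bad w) : Function.Surjective w := by
  obtain ⟨i, j, k, _, _, h2, h1, h0⟩ := h
  intro y
  have hy : y = 0 ∨ y = 1 ∨ y = 2 := by revert y; decide
  rcases hy with rfl | rfl | rfl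
  · exact ⟨k, h0⟩
  · exact ⟨j, h1⟩
  · exact ⟨i, h2⟩

lemma cardM {n : ℕ} (S : Finset (Fin 3)) :
    #(univ.filter fun w : Fin n → Fin 3 => ∀ x, w x ∈ S) = S.card ^ n := by
  have h : (univ.filter fun w : Fin n → Fin 3 => ∀ x, w x ∈ S) =
      Fintype.piFinset (fun _ : Fin n => S) := by
    ext w; simp [Fintype.mem_piFinset]
  rw [h, Fintype.card_piFinset]
  simp

lemma nsCnt_eq (n : ℕ) (hn : 1 ≤ n) :
    #(univ.filter fun w : Fin n → Fin 3 => ¬ Function.Surjective w) + 3 = 3 * 2 ^ n := by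
  classical
  set MA : Finset (Fin n → Fin 3) := univ.filter fun w => ∀ x, w x ∈ ({1, 2} : Finset (Fin 3)) with hMA
  set MB : Finset (Fin n → Fin 3) := univ.filter fun w => ∀ x, w x ∈ ({0, 2} : Finset (Fin 3)) with hMB
  set MC : Finset (Fin n → Fin 3) := univ.filter fun w => ∀ x, w x ∈ ({0, 1} : Finset (Fin 3)) with hMC
  have hfilter : (univ.filter fun w : Fin n → Fin 3 => ¬ Function.Surjective w) = MA ∪ MB ∪ MC := by
    ext w
    simp only [hMA, hMB, hMC, Finset.mem_union, Finset.mem_filter, Finset.mem_univ, true_and]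
    constructor
    · intro hw
      rw [Function.Surjective] at hw
      push_neg at hw
      obtain ⟨y, hy⟩ := hw
      have h3 : ∀ z : Fin 3, z = 0 ∨ z = 1 ∨ z = 2 := by decide
      rcases h3 y with rfl | rfl | rfl
      · exact Or.inl (Or.inl fun x => by have := hy x; revert this; generalize w x = z; revert z; decide)
      · exact Or.inl (Or.inr fun x => by have := hy x; revert this; generalize w x = z; revert z; decide)
      · exact Or.inr fun x => by have := hy x; revert this; generalize w x = z; revert z; decide
    · rintro ((h | h) | h) hw
      · obtain ⟨x, hx⟩ := hw 0
        have := h x; rw [hx] at this; revert this; decide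
      · obtain ⟨x, hx⟩ := hw 1
        have := h x; rw [hx] at this; revert this; decide
      · obtain ⟨x, hx⟩ := hw 2
        have := h x; rw [hx] at this; revert this; decide
  have cardA : MA.card = 2 ^ n := by rw [hMA, cardM]; rfl
  have cardB : MB.card = 2 ^ n := by rw [hMB, cardM]; rfl
  have cardC : MC.card = 2 ^ n := by rw [hMC, cardM]; rfl
  have interAB : MA ∩ MB = univ.filter fun w : Fin n → Fin 3 => ∀ x, w x ∈ ({2} : Finset (Fin 3)) := by
    ext w
    simp only [hMA, hMB, Finset.mem_inter, Finset.mem_filter, Finset.mem_univ, true_and]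
    constructor
    · rintro ⟨h1, h2⟩ x
      have a := h1 x; have b := h2 x; revert a b; generalize w x = z; revert z; decide
    · intro h
      constructor <;> intro x <;> (have := h x; revert this; generalize w x = z; revert z; decide)
  have interAC : MA ∩ MC = univ.filter fun w : Fin n → Fin 3 => ∀ x, w x ∈ ({1} : Finset (Fin 3)) := by
    ext w
    simp only [hMA, hMC, Finset.mem_inter, Finset.mem_filter, Finset.mem_univ, true_and]
    constructor
    · rintro ⟨h1, h2⟩ x
      have a := h1 x; have b := h2 x; revert a b; generalize w x = z; revert z; decide
    · intro h
      constructor <;> intro x <;> (have := h x; revert this; generalize w x = z; revert z; decide)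
  have interBC : MB ∩ MC = univ.filter fun w : Fin n → Fin 3 => ∀ x, w x ∈ ({0} : Finset (Fin 3)) := by
    ext w
    simp only [hMB, hMC, Finset.mem_inter, Finset.mem_filter, Finset.mem_univ, true_and]
    constructor
    · rintro ⟨h1, h2⟩ x
      have a := h1 x; have b := h2 x; revert a b; generalize w x = z; revert z; decide
    · intro h
      constructor <;> intro x <;> (have := h x; revert this; generalize w x = z; revert z; decide)
  have cardAB : (MA ∩ MB).card = 1 := by rw [interAB, cardM]; simp
  have cardAC : (MA ∩ MC).card = 1 := by rw [interAC, cardM]; simp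
  have cardBC : (MB ∩ MC).card = 1 := by rw [interBC, cardM]; simp
  have hdisj : Disjoint (MA ∩ MC) (MB ∩ MC) := by
    rw [Finset.disjoint_left]
    intro w hwa hwb
    rw [interAC, Finset.mem_filter] at hwa
    rw [interBC, Finset.mem_filter] at hwb
    have a := hwa.2 ⟨0, hn⟩; have b := hwb.2 ⟨0, hn⟩
    generalize (⟨0, hn⟩ : Fin n) = x0 at a b; generalize w x0 = z at a b; revert a b; revert z; decide
  have hUAB : (MA ∪ MB).card + 1 = 2 ^ n + 2 ^ n := by
    rw [← cardAB, Finset.card_union_add_card_inter, cardA, cardB]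
  have hinter2 : ((MA ∪ MB) ∩ MC).card = 2 := by
    rw [Finset.union_inter_distrib_right, Finset.card_union_of_disjoint hdisj, cardAC, cardBC]
  have hfinal := Finset.card_union_add_card_inter (MA ∪ MB) MC
  rw [hinter2, cardC] at hfinal
  rw [hfilter]
  omega

def sCnt (n : ℕ) : ℕ :=
  #(univ.filter fun w : Fin n → Fin 3 => Function.Surjective w ∧ ¬ Bad w)

lemma tCnt_split (n : ℕ) : tCnt n = sCnt n +
    #(univ.filter fun w : Fin n → Fin 3 => ¬ Function.Surjective w) := by
  rw [tCnt, card_filter_split (fun w : Fin n → Fin 3 => ¬ Bad w) Function.Surjective]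
  congr 1
  · rw [sCnt]; exact filter_iff_card fun v => by tauto
  · exact filter_iff_card fun v => by
      have h := @bad_surjective n v; tauto

-- === the structures part (statement defs) go ABOVE this in final file ===

lemma OrdPartition.ext' {n k : ℕ} {P Q : OrdPartition n k} (h : P.blocks = Q.blocks) :
    P = Q := by
  cases P; cases Q; cases h; rfl

lemma existsUnique_block {n : ℕ} (P : OrdPartition n 3) (x : Fin n) :
    ∃! i, x ∈ P.blocks i := by
  obtain ⟨i, hi⟩ := P.blocks_cover x
  refine ⟨i, hi, fun j hj => ?_⟩
  by_contra hne
  exact (Finset.disjoint_left.mp (P.blocks_disjoint j i hne) hj) hi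

noncomputable def wordOf {n : ℕ} (P : OrdPartition n 3) (x : Fin n) : Fin 3 :=
  Fintype.choose (fun i => x ∈ P.blocks i) (existsUnique_block P x)

lemma wordOf_spec {n : ℕ} (P : OrdPartition n 3) (x : Fin n) :
    x ∈ P.blocks (wordOf P x) :=
  Fintype.choose_spec _ (existsUnique_block P x)

lemma wordOf_eq_iff {n : ℕ} (P : OrdPartition n 3) (x : Fin n) (i : Fin 3) :
    wordOf P x = i ↔ x ∈ P.blocks i := by
  constructor
  · rintro rfl; exact wordOf_spec P x
  · intro h
    exact ((existsUnique_block P x).unique (wordOf_spec P x) h)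

lemma wordOf_surj {n : ℕ} (P : OrdPartition n 3) : Function.Surjective (wordOf P) := by
  intro i
  obtain ⟨x, hx⟩ := P.blocks_nonempty i
  exact ⟨x, (wordOf_eq_iff P x i).mpr hx⟩

lemma rev_lt_iff : ∀ a c : Fin 3, (p321 a < p321 c ↔ c < a) := by decide

lemma strictMono_fin3 {ι : Fin 3 → Fin 3} (h : StrictMono ι) :
    ι 0 = 0 ∧ ι 1 = 1 ∧ ι 2 = 2 := by
  have h01 : ι 0 < ι 1 := h (by decide)
  have h12 : ι 1 < ι 2 := h (by decide)
  rw [Fin.lt_def] at h01 h12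
  have b0 := (ι 0).isLt; have b1 := (ι 1).isLt; have b2 := (ι 2).isLt
  refine ⟨?_, ?_, ?_⟩ <;> · apply Fin.ext; omega

lemma opContains_iff_bad {n : ℕ} (P : OrdPartition n 3) :
    OPContains P p321 ↔ Bad (wordOf P) := by
  constructor
  · rintro ⟨ι, hι, b, hb, hord⟩
    obtain ⟨hι0, hι1, hι2⟩ := strictMono_fin3 hι
    have h21 : b 2 < b 1 := (hord 2 1).mpr ((rev_lt_iff 2 1).mpr (by decide))
    have h10 : b 1 < b 0 := (hord 1 0).mpr ((rev_lt_iff 1 0).mpr (by decide))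
    refine ⟨b 2, b 1, b 0, h21, h10, ?_, ?_, ?_⟩
    · rw [wordOf_eq_iff]; have := hb 2; rw [hι2] at this; exact this
    · rw [wordOf_eq_iff]; have := hb 1; rw [hι1] at this; exact this
    · rw [wordOf_eq_iff]; have := hb 0; rw [hι0] at this; exact this
  · rintro ⟨i, j, k, hij, hjk, h2, h1, h0⟩
    refine ⟨id, strictMono_id, ![k, j, i], ?_, ?_⟩
    · intro a
      fin_cases a
      · exact (wordOf_eq_iff P k 0).mp h0
      · exact (wordOf_eq_iff P j 1).mp h1
      · exact (wordOf_eq_iff P i 2).mp h2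
    · intro a c
      rw [rev_lt_iff a c]
      fin_cases a <;> fin_cases c <;>
        simp [Matrix.cons_val_zero, Matrix.cons_val_one, Matrix.head_cons] <;>
        first
          | exact lt_irrefl _
          | exact fun h => absurd rfl (by omega)
          | omega
          | (constructor <;> intro <;>
              first
                | assumption
                | exact hjk
                | exact hij
                | exact hij.trans hjk
                | decide
                | exact absurd (by omega) (by omega))

def partOf {n : ℕ} (w : Fin n → Fin 3) (hw : Function.Surjective w) : OrdPartition n 3 where
  blocks i := univ.filter fun x => w x = i
  blocks_nonempty i := by
    obtain ⟨x, hx⟩ := hw i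
    exact ⟨x, by simp [hx]⟩
  blocks_disjoint i j hij := by
    rw [Finset.disjoint_left]
    intro x hx hx'
    simp only [Finset.mem_filter] at hx hx'
    exact hij (hx.2 ▸ hx'.2)
  blocks_cover x := ⟨w x, by simp⟩

lemma wordOf_partOf {n : ℕ} (w : Fin n → Fin 3) (hw : Function.Surjective w) :
    wordOf (partOf w hw) = w := by
  funext x
  rw [wordOf_eq_iff]
  simp [partOf]

lemma partOf_wordOf {n : ℕ} (P : OrdPartition n 3) :
    partOf (wordOf P) (wordOf_surj P) = P := by
  apply OrdPartition.ext'
  funext i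
  ext x
  simp only [partOf, Finset.mem_filter, Finset.mem_univ, true_and]
  exact wordOf_eq_iff P x i

noncomputable def mainEquiv (n : ℕ) :
    {P : OrdPartition n 3 // ¬ OPContains P p321} ≃
      {w : Fin n → Fin 3 // Function.Surjective w ∧ ¬ Bad w} where
  toFun := fun ⟨P, h⟩ => ⟨wordOf P, wordOf_surj P, fun hb => h ((opContains_iff_bad P).mpr hb)⟩
  invFun := fun ⟨w, hw⟩ => ⟨partOf w hw.1, fun hc => by
    have := (opContains_iff_bad (partOf w hw.1)).mp hc
    rw [wordOf_partOf] at this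
    exact hw.2 this⟩
  left_inv := fun ⟨P, h⟩ => Subtype.ext (partOf_wordOf P)
  right_inv := fun ⟨w, hw⟩ => Subtype.ext (wordOf_partOf w hw.1)

lemma opAvoidCount_eq_sCnt (n : ℕ) : opAvoidCount n 3 3 p321 = sCnt n := by
  rw [opAvoidCount, Nat.card_congr (mainEquiv n), Nat.card_eq_fintype_card, sCnt]
  exact Fintype.card_subtype _


theorem op_three_blocks_321 (n : ℕ) (hn : 1 ≤ n) :
    (opAvoidCount n 3 3 p321 : ℚ) =
      ((n : ℚ) ^ 2 + 3 * n - 16) * 2 ^ ((n : ℤ) - 3) + 3 := by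
  rw [opAvoidCount_eq_sCnt]
  have h1 : (tCnt n : ℚ) = (sCnt n : ℚ) +
      (#(univ.filter fun w : Fin n → Fin 3 => ¬ Function.Surjective w) : ℚ) := by
    rw [tCnt_split n]; push_cast; ring
  have h2 : (#(univ.filter fun w : Fin n → Fin 3 => ¬ Function.Surjective w) : ℚ) + 3 =
      3 * 2 ^ n := by
    exact_mod_cast nsCnt_eq n hn
  have h3 := tCnt_closed n
  have hz : (2 : ℚ) ^ ((n : ℤ) - 3) = 2 ^ n / 8 := by
    rw [zpow_sub₀ (by norm_num : (2:ℚ) ≠ 0), zpow_natCast]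
    norm_num
  rw [hz]
  have : (sCnt n : ℚ) = (tCnt n : ℚ) -
      (#(univ.filter fun w : Fin n → Fin 3 => ¬ Function.Surjective w) : ℚ) := by
    rw [h1]; ring
  rw [this, h3]
  have h2' : (#(univ.filter fun w : Fin n → Fin 3 => ¬ Function.Surjective w) : ℚ) =
      3 * 2 ^ n - 3 := by linarith
  rw [h2']
  ring
end
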